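/- arXiv:2012.01826 — 3 statements merged into one kernel-verified Lean document; each statement's English description precedes it below -/
import Mathlib

section
/- The set M = {ξ ∈ ℝⁿ : N(ξ) K e(ξ) = 0} equals the union P ∪ C of the desired path P and the singular set C of the guiding vector field χ. -/
/-- The generalized cross product of `n` vectors `p 0, …, p (n-1)` in `ℝ^(n+1)`:
its `k`-th component is `(-1)^k` times the determinant of the `n × n` matrix obtained
from the `n × (n+1)` matrix with rows `p i` by deleting the `k`-th column. -/
noncomputable def gcross {n : ℕ} (p : Fin n → EuclideanSpace ℝ (Fin (n + 1))) :
    EuclideanSpace ℝ (Fin (n + 1)) :=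
  WithLp.toLp 2 fun k : Fin (n + 1) => (-1 : ℝ) ^ (k : ℕ) * Matrix.det (Matrix.of fun i j => p i (Fin.succAbove k j))

/-- The guiding vector field `χ(ξ) = ×(∇φ₁(ξ), …, ∇φₙ(ξ)) − N(ξ) K e(ξ)`, where
`N(ξ) K e(ξ) = ∑ i, kᵢ φᵢ(ξ) ∇φᵢ(ξ)`. -/
noncomputable def gvf {n : ℕ} (φ : Fin n → EuclideanSpace ℝ (Fin (n + 1)) → ℝ)
    (kg : Fin n → ℝ) (ξ : EuclideanSpace ℝ (Fin (n + 1))) : EuclideanSpace ℝ (Fin (n + 1)) :=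
  gcross (fun i => gradient (φ i) ξ) - ∑ i, (kg i * φ i ξ) • gradient (φ i) ξ

/-- Evaluation of a finite sum in `EuclideanSpace` at a coordinate. -/
lemma pilp_sum_apply {n m : ℕ} (f : Fin n → EuclideanSpace ℝ (Fin m)) (a : Fin m) :
    (∑ x, f x) a = ∑ x, f x a := by
  induction (Finset.univ : Finset (Fin n)) using Finset.induction with
  | empty => simp
  | insert a s h ih => rw [Finset.sum_insert h, Finset.sum_insert h, ← ih]; rfl

/-- `gcross p` is orthogonal to each `p i`. -/
lemma gcross_orth {n : ℕ} (p : Fin n → EuclideanSpace ℝ (Fin (n + 1))) (i : Fin n) :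
    ∑ k, p i k * gcross p k = 0 := by
  have hdet : (Matrix.of (Fin.cons (p i) (fun j => (p j : Fin (n+1) → ℝ)) :
      Fin (n+1) → Fin (n+1) → ℝ)).det = 0 := by
    apply Matrix.det_zero_of_row_eq (i := 0) (j := i.succ) (Fin.succ_ne_zero i).symm
    funext x
    simp
  rw [Matrix.det_succ_row_zero] at hdet
  rw [← hdet]
  refine Finset.sum_congr rfl fun k _ => ?_
  show p i k * ((-1 : ℝ) ^ (k : ℕ) * _) = _
  rw [Matrix.of_apply, Fin.cons_zero]
  ring_nf
  congr 1

/-- If the vectors `p` are linearly dependent, their generalized cross product vanishes. -/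
lemma gcross_eq_zero_of_dep {n : ℕ} (p : Fin n → EuclideanSpace ℝ (Fin (n + 1)))
    (v : Fin n → ℝ) (hv : v ≠ 0) (h : ∑ j, v j • p j = 0) : gcross p = 0 := by
  ext k
  have hd : (Matrix.of fun i j => p i (Fin.succAbove k j) :
      Matrix (Fin n) (Fin n) ℝ).det = 0 := by
    rw [← Matrix.exists_vecMul_eq_zero_iff]
    refine ⟨v, hv, ?_⟩
    funext b
    have h2 := congrArg (fun x : EuclideanSpace ℝ (Fin (n + 1)) => x (Fin.succAbove k b)) h
    rw [pilp_sum_apply] at h2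
    simpa [Matrix.vecMul, dotProduct] using h2
  show (-1 : ℝ) ^ (k : ℕ) * _ = (0 : EuclideanSpace ℝ (Fin (n+1))) k
  rw [hd]; simp

/-- The set `M = {ξ : N(ξ) K e(ξ) = 0}` equals the union of the desired path
`P = {ξ : e(ξ) = 0}` and the singular set `C = {ξ : χ(ξ) = 0}`. -/
theorem M_eq_P_union_C {n : ℕ} (hn : 1 ≤ n)
    (φ : Fin n → EuclideanSpace ℝ (Fin (n + 1)) → ℝ)
    (hφ : ∀ i, ContDiff ℝ 2 (φ i)) (kg : Fin n → ℝ) (hk : ∀ i, 0 < kg i) :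
    {ξ : EuclideanSpace ℝ (Fin (n + 1)) | ∑ i, (kg i * φ i ξ) • gradient (φ i) ξ = 0} =
      {ξ : EuclideanSpace ℝ (Fin (n + 1)) | ∀ i, φ i ξ = 0} ∪
        {ξ : EuclideanSpace ℝ (Fin (n + 1)) | gvf φ kg ξ = 0} := by
  ext ξ
  simp only [Set.mem_setOf_eq, Set.mem_union]
  set g : Fin n → EuclideanSpace ℝ (Fin (n+1)) := fun i => gradient (φ i) ξ with hg
  constructor
  · intro h
    by_cases hP : ∀ i, φ i ξ = 0
    · exact Or.inl hP
    · refine Or.inr ?_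
      push_neg at hP
      obtain ⟨j, hj⟩ := hP
      have hv : (fun i => kg i * φ i ξ) ≠ 0 := by
        intro h0
        exact hj (by
          have := congrFun h0 j
          simp only [Pi.zero_apply] at this
          exact (mul_eq_zero.mp this).resolve_left (ne_of_gt (hk j)))
      have hz := gcross_eq_zero_of_dep g _ hv h
      simp only [gvf, ← hg, hz, h, sub_zero]
  · rintro (hP | hC)
    · refine Finset.sum_eq_zero fun i _ => by rw [hP i, mul_zero, zero_smul]
    · have hS : gcross g = ∑ i, (kg i * φ i ξ) • g i := by
        have := hC
        simp only [gvf, ← hg, sub_eq_zero] at this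
        exact this
      set S := ∑ i, (kg i * φ i ξ) • g i with hSdef
      have hsum : ∑ k, S k * S k = 0 := by
        have : ∀ k, S k = ∑ i, (kg i * φ i ξ) * g i k := by
          intro k
          rw [hSdef, pilp_sum_apply]
          rfl
        calc ∑ k, S k * S k = ∑ k, (∑ i, (kg i * φ i ξ) * g i k) * S k := by
              refine Finset.sum_congr rfl fun k _ => by rw [← this k]
          _ = ∑ i, (kg i * φ i ξ) * ∑ k, g i k * S k := by
              simp only [Finset.sum_mul]
              rw [Finset.sum_comm]
              refine Finset.sum_congr rfl fun i _ => ?_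
              rw [Finset.mul_sum]
              refine Finset.sum_congr rfl fun k _ => by ring
          _ = 0 := by
              refine Finset.sum_eq_zero fun i _ => ?_
              have := gcross_orth g i
              rw [hS] at this
              rw [this, mul_zero]
      have hSk : ∀ k, S k = 0 := by
        intro k
        have h1 : ∀ k ∈ Finset.univ, (0:ℝ) ≤ S k * S k := fun k _ => mul_self_nonneg _
        have := (Finset.sum_eq_zero_iff_of_nonneg h1).mp hsum k (Finset.mem_univ k)
        exact mul_self_eq_zero.mp this
      rw [← hS] at hSk ⊢
      ext k
      exact hSk k
end

section
/- An asymptotically stable limit cycle of a flow on ℝⁿ cannot be globally attractive: let Ψ be a continuous flow on ℝⁿ (i.e., Ψ : ℝ × ℝⁿ → ℝⁿ continuous with Ψ(0, x) = x and Ψ(t + s, x) = Ψ(t, Ψ(s, x))), and let L ⊆ ℝⁿ be a nonempty compact invariant set (Ψ(t, ·) maps L onto L for all t) that is homeomorphic to the unit circle S¹ and Lyapunov stable (for every ε > 0 there exists δ > 0 such that whenever dist(x, L) < δ, one has dist(Ψ(t, x), L) < ε for all t ≥ 0). Then it is not the case that every point is attracted to L; i.e., there exists x ∈ ℝⁿ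 such that dist(Ψ(t, x), L) does not tend to 0 as t → ∞. -/
open Filter Topology

open Real Set in
private lemma no_circle_contraction (G : ℝ → ℝ → ℂ)
    (hG : ContinuousOn (fun p : ℝ × ℝ => G p.1 p.2) (Set.Icc 0 1 ×ˢ Set.Icc 0 (2*π)))
    (habs : ∀ s ∈ Set.Icc (0:ℝ) 1, ∀ t ∈ Set.Icc (0:ℝ) (2*π), ‖G s t‖ = 1)
    (h0 : ∀ t ∈ Set.Icc (0:ℝ) (2*π), G 0 t = Complex.exp (t * Complex.I))
    (h1 : ∀ t ∈ Set.Icc (0:ℝ) (2*π), G 1 t = G 1 0)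
    (hper : ∀ s ∈ Set.Icc (0:ℝ) 1, G s (2*π) = G s 0) : False := by
  have hπ : (0:ℝ) < π := Real.pi_pos
  set S : Set (ℝ × ℝ) := Set.Icc 0 1 ×ˢ Set.Icc 0 (2*π) with hS
  have hScomp : IsCompact S := isCompact_Icc.prod isCompact_Icc
  have huc := hScomp.uniformContinuousOn_of_continuous hG
  obtain ⟨δ, hδ, hH⟩ := (Metric.uniformContinuousOn_iff).1 huc 1 one_pos
  obtain ⟨n₀, hn₀⟩ := exists_nat_gt (2*π/δ)
  set n : ℕ := max n₀ 2 with hn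
  have hn2 : (2:ℕ) ≤ n := le_max_right _ _
  have hnpos : (0:ℝ) < (n:ℝ) := by
    have : (2:ℝ) ≤ (n:ℝ) := by exact_mod_cast hn2
    linarith
  set c : ℝ := 2*π/n with hc
  have hcpos : 0 < c := by positivity
  have hcδ : c < δ := by
    have h1' : 2*π/δ < (n:ℝ) := lt_of_lt_of_le hn₀ (by exact_mod_cast le_max_left n₀ 2)
    rw [hc, div_lt_iff₀ hnpos] at *
    rw [div_lt_iff₀ hδ] at h1'
    nlinarith
  have hcπ : c ≤ π := by
    rw [hc, div_le_iff₀ hnpos]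
    have : (2:ℝ) ≤ (n:ℝ) := by exact_mod_cast hn2
    nlinarith
  have hnc : (n:ℝ) * c = 2*π := by
    rw [hc]; field_simp [hnpos.ne']
  -- grid
  set tj : ℕ → ℝ := fun j => j * c with htj
  have htjmem : ∀ j : ℕ, j ≤ n → tj j ∈ Set.Icc (0:ℝ) (2*π) := by
    intro j hj
    constructor
    · positivity
    · rw [← hnc]
      exact mul_le_mul_of_nonneg_right (by exact_mod_cast hj) hcpos.le
  -- quotients
  set q : ℕ → ℝ → ℂ := fun j s => G s (tj (j+1)) / G s (tj j) with hq
  have hGne : ∀ s ∈ Set.Icc (0:ℝ) 1, ∀ t ∈ Set.Icc (0:ℝ) (2*π), G s t ≠ 0 := by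
    intro s hs t ht h
    have := habs s hs t ht
    rw [h] at this; simp at this
  have hqabs : ∀ j < n, ∀ s ∈ Set.Icc (0:ℝ) 1, ‖q j s‖ = 1 := by
    intro j hj s hs
    rw [hq]
    simp only [norm_div]
    rw [habs s hs _ (htjmem _ hj), habs s hs _ (htjmem _ (by omega))]
    norm_num
  have hqdist : ∀ j < n, ∀ s ∈ Set.Icc (0:ℝ) 1, ‖q j s - 1‖ < 1 := by
    intro j hj s hs
    have hne : G s (tj j) ≠ 0 := hGne s hs _ (htjmem _ hj.le)
    have key : dist (G s (tj (j+1))) (G s (tj j)) < 1 := by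
      have := hH (s, tj (j+1)) ⟨hs, htjmem _ (by omega)⟩ (s, tj j) ⟨hs, htjmem _ hj.le⟩ ?_
      · exact this
      · rw [Prod.dist_eq]
        simp only [dist_self]
        rw [max_lt_iff]
        refine ⟨hδ, ?_⟩
        rw [Real.dist_eq]
        have : tj (j+1) - tj j = c := by rw [htj]; push_cast; ring
        rw [this, abs_of_pos hcpos]
        exact hcδ
    calc ‖q j s - 1‖
        = ‖G s (tj (j+1)) - G s (tj j)‖ / ‖G s (tj j)‖ := by
          rw [hq]
          rw [div_sub_one hne, norm_div]
      _ < 1 := by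
          rw [habs s hs _ (htjmem _ hj.le), div_one]
          rw [Complex.dist_eq] at key
          exact key
  have hqre : ∀ j < n, ∀ s ∈ Set.Icc (0:ℝ) 1, 0 < (q j s).re := by
    intro j hj s hs
    have h1' := hqdist j hj s hs
    have h2' := hqabs j hj s hs
    have e1 : Complex.normSq (q j s - 1) < 1 := by
      have := Complex.sq_norm (q j s - 1)
      nlinarith [norm_nonneg (q j s - 1)]
    have e2 : Complex.normSq (q j s) = 1 := by
      have := Complex.sq_norm (q j s)
      nlinarith
    rw [Complex.normSq_apply] at e1 e2
    simp only [Complex.sub_re, Complex.sub_im, Complex.one_re, Complex.one_im] at e1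
    nlinarith
  have hqexp : ∀ j < n, ∀ s ∈ Set.Icc (0:ℝ) 1,
      Complex.exp ((Complex.arg (q j s) : ℂ) * Complex.I) = q j s := by
    intro j hj s hs
    have := Complex.norm_mul_exp_arg_mul_I (q j s)
    rw [hqabs j hj s hs] at this
    simpa using this
  -- winding sum
  set w : ℝ → ℝ := fun s => ∑ j ∈ Finset.range n, Complex.arg (q j s) with hw
  have hwcont : ContinuousOn w (Set.Icc 0 1) := by
    apply continuousOn_finset_sum
    intro j hj
    rw [Finset.mem_range] at hj
    intro s hs
    have cwa : ∀ k ≤ n, ContinuousWithinAt (fun s' => G s' (tj k)) (Set.Icc 0 1) s := by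
      intro k hk
      have hco : ContinuousOn (fun s' : ℝ => G s' (tj k)) (Set.Icc 0 1) :=
        hG.comp ((continuous_id.prodMk continuous_const).continuousOn
          (s := Set.Icc (0:ℝ) 1))
          (fun x hx => Set.mem_prod.2 ⟨hx, htjmem _ hk⟩)
      exact hco s hs
    have hqcwa : ContinuousWithinAt (q j) (Set.Icc 0 1) s :=
      (cwa (j+1) (by omega)).div (cwa j hj.le) (hGne s hs _ (htjmem _ hj.le))
    exact (Complex.continuousAt_arg (by
      exact Complex.mem_slitPlane_iff.2 (Or.inl (hqre j hj s hs)))).comp_continuousWithinAt hqcwa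
  -- partial products identity
  have hkey : ∀ s ∈ Set.Icc (0:ℝ) 1, ∀ k ≤ n,
      Complex.exp ((↑(∑ j ∈ Finset.range k, Complex.arg (q j s)) : ℂ) * Complex.I) * G s 0
        = G s (tj k) := by
    intro s hs k hk
    induction k with
    | zero => simp [htj]
    | succ m ih =>
      have hm : m ≤ n := by omega
      have hmn : m < n := by omega
      rw [Finset.sum_range_succ, Complex.ofReal_add, add_mul, Complex.exp_add,
        mul_comm (Complex.exp _) (Complex.exp _), mul_assoc, ih hm, hqexp m hmn s hs, hq]
      exact div_mul_cancel₀ _ (hGne s hs _ (htjmem _ hm))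
  have hint : ∀ s ∈ Set.Icc (0:ℝ) 1, ∃ m : ℤ, w s = m * (2*π) := by
    intro s hs
    have h2' := hkey s hs n le_rfl
    have htn : tj n = 2*π := by rw [htj]; exact hnc
    rw [htn, hper s hs] at h2'
    have hne0 : G s 0 ≠ 0 := hGne s hs 0 ⟨le_rfl, by positivity⟩
    have hexp1 : Complex.exp ((w s : ℂ) * Complex.I) = 1 := by
      have := mul_right_cancel₀ hne0 (h2'.trans (one_mul (G s 0)).symm)
      exact this
    obtain ⟨m, hm⟩ := Complex.exp_eq_one_iff.1 hexp1
    refine ⟨m, ?_⟩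
    have : (w s : ℂ) = m * (2*π) := by
      have hI := Complex.I_ne_zero
      have : (w s : ℂ) * Complex.I = ((m : ℂ) * (2*π)) * Complex.I := by
        rw [hm]; ring
      exact mul_right_cancel₀ hI this
    exact_mod_cast this
  -- w 1 = 0
  have hw1 : w 1 = 0 := by
    show (∑ j ∈ Finset.range n, Complex.arg (q j 1)) = 0
    apply Finset.sum_eq_zero
    intro j hj
    rw [Finset.mem_range] at hj
    have : q j 1 = 1 := by
      show G 1 (tj (j+1)) / G 1 (tj j) = 1
      rw [h1 _ (htjmem _ (by omega)), h1 _ (htjmem _ hj.le)]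
      exact div_self (by rw [← h1 _ (htjmem _ hj.le)]; exact hGne 1 (by norm_num) _ (htjmem _ hj.le))
    rw [this, Complex.arg_one]
  -- w 0 = 2π
  have hw0 : w 0 = 2*π := by
    show (∑ j ∈ Finset.range n, Complex.arg (q j 0)) = 2*π
    have hterm : ∀ j < n, Complex.arg (q j 0) = c := by
      intro j hj
      have e1 : q j 0 = Complex.exp ((c:ℂ) * Complex.I) := by
        show G 0 (tj (j+1)) / G 0 (tj j) = _
        rw [h0 _ (htjmem _ (by omega)), h0 _ (htjmem _ hj.le), ← Complex.exp_sub]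
        congr 1
        rw [htj]
        push_cast
        ring
      rw [e1, Complex.exp_mul_I]
      exact Complex.arg_cos_add_sin_mul_I (Set.mem_Ioc.2 ⟨by linarith, hcπ⟩)
    rw [Finset.sum_congr rfl (fun j hj => hterm j (Finset.mem_range.1 hj)),
      Finset.sum_const, Finset.card_range, nsmul_eq_mul]
    exact hnc
  -- IVT
  have hsub := intermediate_value_Icc' (by norm_num : (0:ℝ) ≤ 1) hwcont
  have hπmem : π ∈ Set.Icc (w 1) (w 0) := by
    rw [hw1, hw0]; constructor <;> linarith
  obtain ⟨s, hs, hws⟩ := hsub hπmem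
  obtain ⟨m, hm⟩ := hint s hs
  rw [hws] at hm
  have h2m : (1:ℝ) = 2*m := by
    have := hm
    field_simp at this
    nlinarith [Real.pi_pos]
  have : (1:ℤ) = 2*m := by exact_mod_cast h2m
  omega

/-- An asymptotically stable limit cycle of a flow on `ℝⁿ` cannot be globally
attractive: if `Ψ` is a continuous flow on `ℝⁿ` and `L` is a nonempty compact
invariant set homeomorphic to the unit circle `S¹` which is Lyapunov stable, then
some point of `ℝⁿ` is not attracted to `L`. -/
theorem limit_cycle_not_globally_attractive {n : ℕ}
    (Ψ : ℝ × EuclideanSpace ℝ (Fin n) → EuclideanSpace ℝ (Fin n))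
    (hcont : Continuous Ψ)
    (hflow0 : ∀ x, Ψ (0, x) = x)
    (hflowadd : ∀ t s x, Ψ (t + s, x) = Ψ (t, Ψ (s, x)))
    (L : Set (EuclideanSpace ℝ (Fin n)))
    (hLne : L.Nonempty) (hLcompact : IsCompact L)
    (hLinv : ∀ t : ℝ, (fun x => Ψ (t, x)) '' L = L)
    (hLcircle : Nonempty
      (L ≃ₜ (Metric.sphere (0 : EuclideanSpace ℝ (Fin 2)) 1)))
    (hLstable : ∀ ε > (0 : ℝ), ∃ δ > (0 : ℝ), ∀ x : EuclideanSpace ℝ (Fin n),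
      Metric.infDist x L < δ → ∀ t : ℝ, 0 ≤ t → Metric.infDist (Ψ (t, x)) L < ε) :
    ∃ x : EuclideanSpace ℝ (Fin n),
      ¬ Tendsto (fun t : ℝ => Metric.infDist (Ψ (t, x)) L) atTop (𝓝 0) := by
  by_contra hcon
  push_neg at hcon
  obtain ⟨hom⟩ := hLcircle
  have hLclosed : IsClosed L := hLcompact.isClosed
  -- the coordinates-into-ℂ map on L
  have hcoord : ∀ i : Fin 2, Continuous fun z : L =>
      ((hom z : EuclideanSpace ℝ (Fin 2)) i : ℝ) := by
    intro i
    exact (EuclideanSpace.proj i).continuous.comp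
      (continuous_subtype_val.comp hom.continuous)
  set jc : C(L, ℂ) := ⟨fun z => ((hom z : EuclideanSpace ℝ (Fin 2)) 0 : ℝ) +
      ((hom z : EuclideanSpace ℝ (Fin 2)) 1 : ℝ) * Complex.I, by
    exact (Complex.continuous_ofReal.comp (hcoord 0)).add
      ((Complex.continuous_ofReal.comp (hcoord 1)).mul continuous_const)⟩ with hjcdef
  have jabs : ∀ z : L, ‖jc z‖ = 1 := by
    intro z
    have hz : ‖(hom z : EuclideanSpace ℝ (Fin 2))‖ = 1 := by
      have := (hom z).2
      rwa [mem_sphere_zero_iff_norm] at this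
    show ‖(_ + _ * Complex.I : ℂ)‖ = 1
    rw [Complex.norm_add_mul_I]
    rw [EuclideanSpace.norm_eq] at hz
    simpa [Fin.sum_univ_two, sq_abs] using hz
  -- the standard parametrization of L
  have hsph : ∀ t : ℝ, ((EuclideanSpace.equiv (Fin 2) ℝ).symm ![Real.cos t, Real.sin t]) ∈
      Metric.sphere (0 : EuclideanSpace ℝ (Fin 2)) 1 := by
    intro t
    rw [mem_sphere_zero_iff_norm, EuclideanSpace.norm_eq]
    simp [Fin.sum_univ_two, sq_abs, Real.cos_sq_add_sin_sq]
  set p : ℝ → Metric.sphere (0 : EuclideanSpace ℝ (Fin 2)) 1 :=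
    fun t => ⟨(EuclideanSpace.equiv (Fin 2) ℝ).symm ![Real.cos t, Real.sin t], hsph t⟩ with hpdef
  have hpcont : Continuous p := by
    apply Continuous.subtype_mk
    apply (EuclideanSpace.equiv (Fin 2) ℝ).symm.continuous.comp
    apply continuous_pi
    intro i
    fin_cases i
    · simpa using Real.continuous_cos
    · simpa using Real.continuous_sin
  set ℓL : ℝ → L := fun t => hom.symm (p t) with hℓLdef
  set ℓ : ℝ → EuclideanSpace ℝ (Fin n) := fun t => (ℓL t : EuclideanSpace ℝ (Fin n)) with hℓdef
  have hℓcont : Continuous ℓ :=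
    continuous_subtype_val.comp (hom.symm.continuous.comp hpcont)
  have hjℓ : ∀ t : ℝ, jc (ℓL t) = Complex.exp (t * Complex.I) := by
    intro t
    show (((hom (ℓL t) : EuclideanSpace ℝ (Fin 2)) 0 : ℝ) : ℂ) +
      ((hom (ℓL t) : EuclideanSpace ℝ (Fin 2)) 1 : ℝ) * Complex.I = _
    have : hom (ℓL t) = p t := hom.apply_symm_apply (p t)
    rw [this]
    show ((Real.cos t : ℝ) : ℂ) + ((Real.sin t : ℝ) : ℂ) * Complex.I = _
    rw [Complex.exp_mul_I, Complex.ofReal_cos, Complex.ofReal_sin]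
  have hℓper : ℓ (2*Real.pi) = ℓ 0 := by
    have : p (2*Real.pi) = p 0 := by
      rw [hpdef]
      simp [Real.cos_two_pi, Real.sin_two_pi, Real.cos_zero, Real.sin_zero]
    rw [hℓdef, hℓLdef]
    simp only [this]
  -- Tietze extension
  obtain ⟨gc, hgcr⟩ := jc.exists_restrict_eq hLclosed
  have hg : ∀ z : L, gc ↑z = jc z := fun z => ContinuousMap.congr_fun hgcr z
  -- choose ε
  have hUopen : IsOpen {x : EuclideanSpace ℝ (Fin n) | gc x ≠ 0} :=
    isOpen_compl_singleton.preimage gc.continuous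
  have hLU : L ⊆ {x | gc x ≠ 0} := by
    intro x hx
    have h1 := hg ⟨x, hx⟩
    have h2 := jabs ⟨x, hx⟩
    simp only [Set.mem_setOf_eq]
    intro h0
    rw [h0] at h1
    rw [← h1] at h2
    simp at h2
  obtain ⟨ε, hε, hthick⟩ := hLcompact.exists_thickening_subset_open hUopen hLU
  have hg0 : ∀ x, Metric.infDist x L < ε → gc x ≠ 0 := fun x hx =>
    hthick ((Metric.mem_thickening_iff_infDist_lt hLne).2 hx)
  -- stability δ
  obtain ⟨δ, hδpos, hδ⟩ := hLstable ε hε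
  -- base point & contraction
  obtain ⟨x₀, hx₀⟩ := hLne
  set K : ℝ → ℝ → EuclideanSpace ℝ (Fin n) :=
    fun a t => (1 - a) • ℓ t + a • x₀ with hKdef
  have hKcont : Continuous fun pr : ℝ × ℝ => K pr.1 pr.2 := by
    apply Continuous.add
    · exact (continuous_const.sub continuous_fst).smul (hℓcont.comp continuous_snd)
    · exact continuous_fst.smul continuous_const
  set C : Set (EuclideanSpace ℝ (Fin n)) :=
    (fun pr : ℝ × ℝ => K pr.1 pr.2) '' (Set.Icc 0 1 ×ˢ Set.Icc 0 (2*Real.pi)) with hCdef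
  have hCcomp : IsCompact C := (isCompact_Icc.prod isCompact_Icc).image hKcont
  -- uniform attraction time T for C
  have key2 : ∀ y, ∃ T : ℝ, 0 ≤ T ∧ Metric.infDist (Ψ (T, y)) L < δ := by
    intro y
    obtain ⟨T, hT⟩ := (((hcon y).eventually_lt_const hδpos).and (eventually_ge_atTop 0)).exists
    exact ⟨T, hT.2, hT.1⟩
  choose Ty hTy0 hTyδ using key2
  have hUo : ∀ y, IsOpen {z | Metric.infDist (Ψ (Ty y, z)) L < δ} := by
    intro y
    apply isOpen_lt _ continuous_const
    exact (Metric.continuous_infDist_pt L).comp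
      (hcont.comp (continuous_const.prodMk continuous_id))
  obtain ⟨tf, htf⟩ := hCcomp.elim_finite_subcover
    (fun y => {z | Metric.infDist (Ψ (Ty y, z)) L < δ}) hUo
    (fun z hz => Set.mem_iUnion.2 ⟨z, hTyδ z⟩)
  obtain ⟨T, hT⟩ := (insert (0:ℝ) (tf.image Ty)).exists_le
  have hT0 : 0 ≤ T := hT 0 (Finset.mem_insert_self _ _)
  have hTmax : ∀ y ∈ tf, Ty y ≤ T := fun y hy =>
    hT _ (Finset.mem_insert_of_mem (Finset.mem_image_of_mem _ hy))
  have claimA : ∀ z ∈ C, Metric.infDist (Ψ (T, z)) L < ε := by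
    intro z hz
    obtain ⟨y, hy, hzU⟩ := Set.mem_iUnion₂.1 (htf hz)
    have h2 := hδ _ hzU (T - Ty y) (by linarith [hTmax y hy, hTy0 y])
    rw [← hflowadd, sub_add_cancel] at h2
    exact h2
  -- invariance
  have hLmem : ∀ t x, x ∈ L → Ψ (t, x) ∈ L := fun t x hx =>
    (hLinv t) ▸ Set.mem_image_of_mem _ hx
  -- the homotopy
  set M : ℝ → ℝ → EuclideanSpace ℝ (Fin n) :=
    fun s t => Ψ (min (2*s) 1 * T, K (max (2*s - 1) 0) t) with hMdef
  have hK0 : ∀ t, K 0 t = ℓ t := by intro t; rw [hKdef]; simp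
  have hM0 : ∀ t, M 0 t = ℓ t := by
    intro t
    rw [hMdef]
    simp only
    rw [show max (2*(0:ℝ) - 1) 0 = 0 by norm_num, show min (2*(0:ℝ)) 1 = 0 by norm_num,
      zero_mul, hK0, hflow0]
  have hM1 : ∀ t, M 1 t = Ψ (T, x₀) := by
    intro t
    rw [hMdef]
    simp only
    rw [show max (2*(1:ℝ) - 1) 0 = 1 by norm_num, show min (2*(1:ℝ)) 1 = 1 by norm_num,
      one_mul, hKdef]
    simp
  have hMper : ∀ s, M s (2*Real.pi) = M s 0 := by
    intro s
    rw [hMdef]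
    simp only [hKdef, hℓper]
  have claimB : ∀ s ∈ Set.Icc (0:ℝ) 1, ∀ t, t ∈ Set.Icc (0:ℝ) (2*Real.pi) ∨ 2*s ≤ 1 →
      gc (M s t) ≠ 0 := by
    intro s hs t ht
    by_cases hhalf : 2*s ≤ 1
    · have ha : max (2*s - 1) 0 = 0 := max_eq_right (by linarith)
      have hmem : M s t ∈ L := by
        rw [hMdef]
        simp only [ha, hK0]
        exact hLmem _ _ (ℓL t).2
      intro hzero
      have h1 := hg ⟨M s t, hmem⟩
      have h2 := jabs ⟨M s t, hmem⟩
      rw [hzero] at h1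
      rw [← h1] at h2
      simp at h2
    · have ht' : t ∈ Set.Icc (0:ℝ) (2*Real.pi) := ht.resolve_right hhalf
      have hτ : min (2*s) 1 = 1 := min_eq_right (by linarith)
      have hKC : K (max (2*s - 1) 0) t ∈ C := by
        refine ⟨(max (2*s - 1) 0, t), ⟨⟨le_max_right _ _, ?_⟩, ht'⟩, rfl⟩
        exact max_le (by linarith [hs.2]) zero_le_one
      apply hg0
      rw [hMdef]
      simp only [hτ, one_mul]
      exact claimA _ hKC
  -- the normalized map
  set G : ℝ → ℝ → ℂ :=
    fun s t => gc (M s t) / ((‖gc (M s t)‖ : ℝ) : ℂ) with hGdef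
  have habs : ∀ s ∈ Set.Icc (0:ℝ) 1, ∀ t ∈ Set.Icc (0:ℝ) (2*Real.pi),
      ‖G s t‖ = 1 := by
    intro s hs t ht
    have hne := claimB s hs t (Or.inl ht)
    rw [hGdef]
    simp only [norm_div, Complex.norm_real, Real.norm_eq_abs]
    rw [abs_of_nonneg (norm_nonneg _)]
    exact div_self (by simpa using hne : ‖gc (M s t)‖ ≠ 0)
  have hMcont : Continuous fun pr : ℝ × ℝ => M pr.1 pr.2 := by
    apply hcont.comp
    apply Continuous.prodMk
    · exact ((((continuous_const (y := (2:ℝ))).mul continuous_fst).min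
        continuous_const).mul continuous_const)
    · exact hKcont.comp (((((continuous_const (y := (2:ℝ))).mul continuous_fst).sub
        continuous_const).max continuous_const).prodMk continuous_snd)
  have hGcont : ContinuousOn (fun pr : ℝ × ℝ => G pr.1 pr.2)
      (Set.Icc 0 1 ×ˢ Set.Icc 0 (2*Real.pi)) := by
    apply ContinuousOn.div
    · exact (gc.continuous.comp hMcont).continuousOn
    · exact (Complex.continuous_ofReal.comp
        (continuous_norm.comp (gc.continuous.comp hMcont))).continuousOn
    · intro pr hpr
      have := claimB pr.1 hpr.1 pr.2 (Or.inl hpr.2)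
      simpa using this
  have h0 : ∀ t ∈ Set.Icc (0:ℝ) (2*Real.pi), G 0 t = Complex.exp (t * Complex.I) := by
    intro t _
    rw [hGdef]
    simp only [hM0]
    have h1 : gc (ℓ t) = Complex.exp (t * Complex.I) := (hg (ℓL t)).trans (hjℓ t)
    rw [h1, Complex.norm_exp_ofReal_mul_I]
    simp
  have h1' : ∀ t ∈ Set.Icc (0:ℝ) (2*Real.pi), G 1 t = G 1 0 := by
    intro t _
    rw [hGdef]
    simp only [hM1]
  have hper : ∀ s ∈ Set.Icc (0:ℝ) 1, G s (2*Real.pi) = G s 0 := by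
    intro s _
    rw [hGdef]
    simp only [hMper]
  exact no_circle_contraction G hGcont habs h0 h1' hper
end

section
/- Finite-time maximal solutions of the normalized field end at singular points: let χ : ℝ^m → ℝ^m be continuous, s > 0, and let ξ : [0, t*) → ℝ^m with t* < ∞ be differentiable and satisfy ξ′(t) = s · χ(ξ(t)) / ‖χ(ξ(t))‖ for all t ∈ [0, t*) (in particular ‖ξ′(t)‖ = s). Then (i) the limit ξ* := lim_{t → t*} ξ(t) exists; and (ii) if moreover χ is locally Lipschitz in a neighborhood of ξ* and χ(ξ*) ≠ 0, then there exist ε > 0 and a differentiable extension of ξ to [0, t* + ε) that still solves ξ′ = s χ(ξ)/‖χ(ξ)‖; hence if t* is the maximal time of existence of the solution, then χ(ξ*) = 0. -/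
open Set Filter Topology

lemma norm_smul_div_norm_sub_le {E : Type*} [NormedAddCommGroup E] [NormedSpace ℝ E]
    {c s : ℝ} (hc : 0 < c) (hs : 0 ≤ s) {u v : E} (hu : c ≤ ‖u‖) (hv : c ≤ ‖v‖) :
    ‖(s / ‖u‖) • u - (s / ‖v‖) • v‖ ≤ (2 * s / c) * ‖u - v‖ := by
  have ha : (0:ℝ) < ‖u‖ := lt_of_lt_of_le hc hu
  have hb : (0:ℝ) < ‖v‖ := lt_of_lt_of_le hc hv
  have key : (s / ‖u‖) • u - (s / ‖v‖) • v
      = (s / ‖u‖) • (u - v) + ((s / ‖u‖) - (s / ‖v‖)) • v := by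
    rw [smul_sub, sub_smul]; abel
  rw [key]
  have h1 : ‖(s / ‖u‖) • (u - v)‖ ≤ (s / c) * ‖u - v‖ := by
    rw [norm_smul, Real.norm_eq_abs, abs_of_nonneg (div_nonneg hs ha.le)]
    exact mul_le_mul_of_nonneg_right (div_le_div_of_nonneg_left hs hc hu) (norm_nonneg _)
  have h2 : ‖((s / ‖u‖) - (s / ‖v‖)) • v‖ ≤ (s / c) * ‖u - v‖ := by
    rw [norm_smul, Real.norm_eq_abs]
    have hdiff : (s / ‖u‖) - (s / ‖v‖) = s * (‖v‖ - ‖u‖) / (‖u‖ * ‖v‖) := by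
      field_simp
    rw [hdiff, abs_div, abs_mul, abs_of_nonneg hs, abs_of_pos (mul_pos ha hb)]
    have hnn : |‖v‖ - ‖u‖| ≤ ‖u - v‖ := by
      rw [abs_sub_comm]; exact abs_norm_sub_norm_le u v
    calc s * |‖v‖ - ‖u‖| / (‖u‖ * ‖v‖) * ‖v‖
        = s * |‖v‖ - ‖u‖| / ‖u‖ := by field_simp
      _ ≤ s * ‖u - v‖ / ‖u‖ := by
          exact div_le_div_of_nonneg_right (mul_le_mul_of_nonneg_left hnn hs) ha.le
      _ ≤ s * ‖u - v‖ / c := by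
          apply div_le_div_of_nonneg_left (mul_nonneg hs (norm_nonneg _)) hc hu
      _ = (s / c) * ‖u - v‖ := by ring
  calc ‖(s / ‖u‖) • (u - v) + ((s / ‖u‖) - (s / ‖v‖)) • v‖
      ≤ ‖(s / ‖u‖) • (u - v)‖ + ‖((s / ‖u‖) - (s / ‖v‖)) • v‖ := norm_add_le _ _
    _ ≤ (s / c) * ‖u - v‖ + (s / c) * ‖u - v‖ := add_le_add h1 h2
    _ = (2 * s / c) * ‖u - v‖ := by ring


/-- Finite-time maximal solutions of the normalized vector field end at singular
points: if `ξ : [0, t*) → ℝ^m`, `t* < ∞`, solves `ξ' = s·χ(ξ)/‖χ(ξ)‖` (so `‖ξ'‖ = s`),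
then (i) the limit `ξ* = lim_{t → t*} ξ(t)` exists; (ii) if `χ` is Lipschitz near `ξ*`
and `χ(ξ*) ≠ 0`, the solution extends to `[0, t* + ε)`; hence (iii) if no extension
exists (`t*` is maximal), then `χ(ξ*) = 0`. -/
theorem finite_time_blowup_ends_at_singular_point {m : ℕ}
    (χ : EuclideanSpace ℝ (Fin m) → EuclideanSpace ℝ (Fin m))
    (hχ : Continuous χ) (s : ℝ) (hs : 0 < s)
    (tstar : ℝ) (htstar : 0 < tstar)
    (ξ : ℝ → EuclideanSpace ℝ (Fin m))
    (hne : ∀ t ∈ Ico (0 : ℝ) tstar, χ (ξ t) ≠ 0)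
    (hode : ∀ t ∈ Ico (0 : ℝ) tstar,
      HasDerivWithinAt ξ ((s / ‖χ (ξ t)‖) • χ (ξ t)) (Ico (0 : ℝ) tstar) t) :
    ∃ ξstar : EuclideanSpace ℝ (Fin m),
      Tendsto ξ (𝓝[Ico (0 : ℝ) tstar] tstar) (𝓝 ξstar) ∧
      ((∃ (K : NNReal) (U : Set (EuclideanSpace ℝ (Fin m))),
          U ∈ 𝓝 ξstar ∧ LipschitzOnWith K χ U) →
        χ ξstar ≠ 0 →
          ∃ ε > (0 : ℝ), ∃ η : ℝ → EuclideanSpace ℝ (Fin m),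
            (∀ t ∈ Ico (0 : ℝ) tstar, η t = ξ t) ∧
            (∀ t ∈ Ico (0 : ℝ) (tstar + ε), χ (η t) ≠ 0) ∧
            (∀ t ∈ Ico (0 : ℝ) (tstar + ε),
              HasDerivWithinAt η ((s / ‖χ (η t)‖) • χ (η t))
                (Ico (0 : ℝ) (tstar + ε)) t)) ∧
      ((∃ (K : NNReal) (U : Set (EuclideanSpace ℝ (Fin m))),
          U ∈ 𝓝 ξstar ∧ LipschitzOnWith K χ U) →
        (¬ ∃ ε > (0 : ℝ), ∃ η : ℝ → EuclideanSpace ℝ (Fin m),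
            (∀ t ∈ Ico (0 : ℝ) tstar, η t = ξ t) ∧
            (∀ t ∈ Ico (0 : ℝ) (tstar + ε), χ (η t) ≠ 0) ∧
            (∀ t ∈ Ico (0 : ℝ) (tstar + ε),
              HasDerivWithinAt η ((s / ‖χ (η t)‖) • χ (η t))
                (Ico (0 : ℝ) (tstar + ε)) t)) →
        χ ξstar = 0) := by
  classical
  -- norm of the derivative is `s`
  have hnorm : ∀ t ∈ Ico (0:ℝ) tstar, ‖(s / ‖χ (ξ t)‖) • χ (ξ t)‖ = s := by
    intro t ht
    have h0 : ‖χ (ξ t)‖ ≠ 0 := norm_ne_zero_iff.2 (hne t ht)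
    rw [norm_smul, Real.norm_eq_abs, abs_of_nonneg (div_nonneg hs.le (norm_nonneg _)),
      div_mul_cancel₀ _ h0]
  -- `ξ` is `s`-Lipschitz on `[0, t*)`
  have hlip : ∀ x ∈ Ico (0:ℝ) tstar, ∀ y ∈ Ico (0:ℝ) tstar, ‖ξ y - ξ x‖ ≤ s * ‖y - x‖ := by
    intro x hx y hy
    exact (convex_Ico 0 tstar).norm_image_sub_le_of_norm_hasDerivWithin_le hode
      (fun t ht => (hnorm t ht).le) hx hy
  have hneBot : (𝓝[Ico (0:ℝ) tstar] tstar).NeBot := by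
    apply mem_closure_iff_nhdsWithin_neBot.1
    rw [closure_Ico (ne_of_lt htstar)]
    exact ⟨htstar.le, le_refl _⟩
  have hcauchy : Cauchy (Filter.map ξ (𝓝[Ico (0:ℝ) tstar] tstar)) := by
    rw [Metric.cauchy_iff]
    refine ⟨Filter.map_neBot, fun ε hε => ?_⟩
    set δ := ε / (4 * s) with hδdef
    have hδpos : 0 < δ := div_pos hε (by positivity)
    refine ⟨ξ '' (Ico (0:ℝ) tstar ∩ Ioo (tstar - δ) (tstar + δ)), ?_, ?_⟩
    · exact image_mem_map (inter_mem_nhdsWithin _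
        (Ioo_mem_nhds (by linarith) (by linarith)))
    · rintro a ⟨x, ⟨hx, hx'⟩, rfl⟩ b ⟨y, ⟨hy, hy'⟩, rfl⟩
      rw [dist_eq_norm]
      have habs : ‖x - y‖ ≤ 2 * δ := by
        rw [Real.norm_eq_abs]
        have h1 : |x - tstar| ≤ δ := by
          rw [abs_le]; constructor <;> [linarith [hx'.1]; linarith [hx'.2]]
        have h2 : |tstar - y| ≤ δ := by
          rw [abs_le]; constructor <;> [linarith [hy'.2]; linarith [hy'.1]]
        calc |x - y| ≤ |x - tstar| + |tstar - y| := abs_sub_le x tstar y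
          _ ≤ 2 * δ := by linarith
      have hkey : s * (2 * δ) = ε / 2 := by
        rw [hδdef]; field_simp; ring
      calc ‖ξ x - ξ y‖ ≤ s * ‖x - y‖ := hlip y hy x hx
        _ ≤ s * (2 * δ) := mul_le_mul_of_nonneg_left habs hs.le
        _ = ε / 2 := hkey
        _ < ε := by linarith
  obtain ⟨ξstar, hξstar⟩ := CompleteSpace.complete hcauchy
  have htend : Tendsto ξ (𝓝[Ico (0:ℝ) tstar] tstar) (𝓝 ξstar) := hξstar
  have main : (∃ (K : NNReal) (U : Set (EuclideanSpace ℝ (Fin m))),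
          U ∈ 𝓝 ξstar ∧ LipschitzOnWith K χ U) →
        χ ξstar ≠ 0 →
          ∃ ε > (0 : ℝ), ∃ η : ℝ → EuclideanSpace ℝ (Fin m),
            (∀ t ∈ Ico (0 : ℝ) tstar, η t = ξ t) ∧
            (∀ t ∈ Ico (0 : ℝ) (tstar + ε), χ (η t) ≠ 0) ∧
            (∀ t ∈ Ico (0 : ℝ) (tstar + ε),
              HasDerivWithinAt η ((s / ‖χ (η t)‖) • χ (η t))
                (Ico (0 : ℝ) (tstar + ε)) t) := by
    rintro ⟨K, U, hU, hKU⟩ hχ0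
    set c := ‖χ ξstar‖ with hcdef
    have hc : 0 < c := norm_pos_iff.2 hχ0
    -- a ball around ξstar inside U where ‖χ‖ ≥ c/2
    have h1 : {x | c/2 ≤ ‖χ x‖} ∈ 𝓝 ξstar := by
      have hco : ContinuousAt (fun x => ‖χ x‖) ξstar := hχ.norm.continuousAt
      have h2 : {x | c/2 < ‖χ x‖} ∈ 𝓝 ξstar :=
        hco.preimage_mem_nhds (isOpen_Ioi.mem_nhds (half_lt_self hc))
      exact mem_of_superset h2 fun x hx => show c/2 ≤ ‖χ x‖ from le_of_lt hx
    obtain ⟨r, hr, hrsub⟩ := Metric.nhds_basis_closedBall.mem_iff.1 (inter_mem hU h1)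
    have hrU : Metric.closedBall ξstar r ⊆ U := fun x hx => (hrsub hx).1
    have hrc : ∀ x ∈ Metric.closedBall ξstar r, c/2 ≤ ‖χ x‖ := fun x hx => (hrsub hx).2
    -- the normalized field is Lipschitz on that ball
    have hFlip : LipschitzOnWith ((2*s/(c/2) * K).toNNReal)
        (fun x => (s/‖χ x‖) • χ x) (Metric.closedBall ξstar r) := by
      apply LipschitzOnWith.of_dist_le_mul
      intro x hx y hy
      rw [dist_eq_norm]
      have h := norm_smul_div_norm_sub_le (half_pos hc) hs.le (hrc x hx) (hrc y hy)
      have hχd : ‖χ x - χ y‖ ≤ K * dist x y := by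
        rw [← dist_eq_norm]; exact hKU.dist_le_mul x (hrU hx) y (hrU hy)
      have hnn : (0:ℝ) ≤ 2*s/(c/2)*K := by positivity
      calc ‖(s/‖χ x‖) • χ x - (s/‖χ y‖) • χ y‖
          ≤ (2*s/(c/2)) * ‖χ x - χ y‖ := h
        _ ≤ (2*s/(c/2)) * (K * dist x y) := by
            apply mul_le_mul_of_nonneg_left hχd (by positivity)
        _ = (2*s/(c/2) * K) * dist x y := by ring
        _ = ((2*s/(c/2) * K).toNNReal : ℝ) * dist x y := by
            rw [Real.coe_toNNReal _ hnn]
    set a := r / s with hadef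
    have hapos : 0 < a := div_pos hr hs
    have hpl : IsPicardLindelof (fun _ x => (s/‖χ x‖) • χ x)
        (tmin := tstar - a) (tmax := tstar + a) ⟨tstar, by constructor <;> linarith⟩ ξstar
        r.toNNReal 0 s.toNNReal ((2*s/(c/2) * K).toNNReal) :=
      { lipschitzOnWith := fun _ _ => by rw [Real.coe_toNNReal _ hr.le]; exact hFlip
        continuousOn := fun _ _ => continuousOn_const
        norm_le := fun t _ x hx => by
          rw [Real.coe_toNNReal _ hr.le] at hx
          have h0 : ‖χ x‖ ≠ 0 := ne_of_gt (lt_of_lt_of_le (half_pos hc) (hrc x hx))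
          rw [norm_smul, Real.norm_eq_abs, abs_of_nonneg (div_nonneg hs.le (norm_nonneg _)),
            div_mul_cancel₀ _ h0, Real.coe_toNNReal _ hs.le]
        mul_max_le := by
          simp only [Real.coe_toNNReal _ hs.le, Real.coe_toNNReal _ hr.le, NNReal.coe_zero,
            sub_zero]
          rw [add_sub_cancel_left, sub_sub_cancel, max_self]
          have : s * a = r := by rw [hadef]; field_simp
          linarith }
    obtain ⟨α, hα0, hα⟩ := hpl.exists_eq_forall_mem_Icc_hasDerivWithinAt₀
    replace hα0 : α tstar = ξstar := hα0
    have hαcont : ContinuousOn α (Icc (tstar - a) (tstar + a)) :=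
      fun t ht => (hα t ht).continuousWithinAt
    have hne' : {t | χ (α t) ≠ 0} ∈ 𝓝[Icc (tstar - a) (tstar + a)] tstar := by
      have hcw : ContinuousWithinAt (fun t => χ (α t)) (Icc (tstar - a) (tstar + a)) tstar :=
        (hχ.comp_continuousOn hαcont).continuousWithinAt ⟨by linarith, by linarith⟩
      have hmem : {(0 : EuclideanSpace ℝ (Fin m))}ᶜ ∈ 𝓝 (χ (α tstar)) := by
        rw [hα0]; exact isOpen_compl_singleton.mem_nhds hχ0
      exact hcw.preimage_mem_nhdsWithin hmem
    obtain ⟨δ, hδpos, hδ⟩ := Metric.mem_nhdsWithin_iff.1 hne'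
    set ε := min a δ with hεdef
    have hεpos : 0 < ε := lt_min hapos hδpos
    have hεa : ε ≤ a := min_le_left _ _
    have hεδ : ε ≤ δ := min_le_right _ _
    set η : ℝ → EuclideanSpace ℝ (Fin m) := fun t => if t < tstar then ξ t else α t with hηdef
    have hηξ : ∀ t ∈ Ico (0:ℝ) tstar, η t = ξ t := fun t ht => if_pos ht.2
    have hηα : ∀ t, tstar ≤ t → η t = α t := fun t ht => if_neg (not_lt.2 ht)
    have hηtstar : η tstar = ξstar := by rw [hηα tstar le_rfl, hα0]
    -- nonvanishing of χ along η
    have hne2 : ∀ t ∈ Ico (0:ℝ) (tstar + ε), χ (η t) ≠ 0 := by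
      intro t ht
      by_cases h : t < tstar
      · rw [hηξ t ⟨ht.1, h⟩]; exact hne t ⟨ht.1, h⟩
      · push_neg at h
        rw [hηα t h]
        apply hδ
        constructor
        · rw [Metric.mem_ball, Real.dist_eq, abs_of_nonneg (by linarith)]
          have := ht.2
          linarith
        · exact ⟨by linarith, by linarith [ht.2]⟩
    -- derivative of η on the interior of [0, t*)
    have hηderiv : ∀ t ∈ Ioo (0:ℝ) tstar,
        HasDerivAt η ((s/‖χ (ξ t)‖) • χ (ξ t)) t := by
      intro t ht
      have h1 : HasDerivAt ξ ((s/‖χ (ξ t)‖) • χ (ξ t)) t :=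
        (hode t ⟨ht.1.le, ht.2⟩).hasDerivAt (Ico_mem_nhds ht.1 ht.2)
      apply h1.congr_of_eventuallyEq
      filter_upwards [Iio_mem_nhds ht.2] with x hx
      exact if_pos hx
    have hIoomem : Ioo (0:ℝ) tstar ∈ 𝓝[<] tstar := Ioo_mem_nhdsLT_of_mem ⟨htstar, le_rfl⟩
    have htendlt : Tendsto ξ (𝓝[<] tstar) (𝓝 ξstar) :=
      htend.mono_left (nhdsWithin_le_iff.2
        (mem_of_superset hIoomem Ioo_subset_Ico_self))
    have hFc : ContinuousAt (fun x => (s/‖χ x‖) • χ x) ξstar :=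
      ((continuousAt_const.div hχ.norm.continuousAt (norm_ne_zero_iff.2 hχ0)).smul
        hχ.continuousAt)
    -- left derivative at tstar
    have hL : HasDerivWithinAt η ((s/‖χ ξstar‖) • χ ξstar) (Iic tstar) tstar := by
      apply hasDerivWithinAt_Iic_of_tendsto_deriv (s := Ioo 0 tstar)
      · exact fun x hx => (hηderiv x hx).differentiableAt.differentiableWithinAt
      · rw [ContinuousWithinAt, hηtstar]
        have hξt : Tendsto ξ (𝓝[Ioo (0:ℝ) tstar] tstar) (𝓝 ξstar) :=
          htend.mono_left (nhdsWithin_mono _ Ioo_subset_Ico_self)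
        apply hξt.congr'
        filter_upwards [self_mem_nhdsWithin] with x hx
        exact (if_pos hx.2).symm
      · exact hIoomem
      · apply Tendsto.congr' _ (hFc.tendsto.comp htendlt)
        filter_upwards [hIoomem] with x hx
        simp only [Function.comp]
        exact ((hηderiv x hx).deriv).symm
    -- right derivative at tstar
    have hR : HasDerivWithinAt η ((s/‖χ ξstar‖) • χ ξstar)
        (Icc tstar (tstar + a)) tstar := by
      have hsub : Icc tstar (tstar + a) ⊆ Icc (tstar - a) (tstar + a) :=
        Icc_subset_Icc (by linarith) le_rfl
      have h := (hα tstar ⟨by linarith, by linarith⟩).mono hsub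
      rw [hα0] at h
      exact h.congr (fun x hx => hηα x hx.1) (by rw [hηtstar, hα0])
    have hjunction : HasDerivWithinAt η ((s/‖χ (η tstar)‖) • χ (η tstar))
        (Ico 0 (tstar + ε)) tstar := by
      rw [hηtstar]
      apply (hL.union hR).mono
      intro x hx
      by_cases h : x ≤ tstar
      · exact Or.inl h
      · exact Or.inr ⟨le_of_not_ge h, by linarith [hx.2]⟩
    refine ⟨ε, hεpos, η, hηξ, hne2, ?_⟩
    intro t ht
    rcases lt_trichotomy t tstar with h | h | h
    · -- t < tstar
      rw [hηξ t ⟨ht.1, h⟩]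
      have h1 : HasDerivWithinAt ξ ((s/‖χ (ξ t)‖) • χ (ξ t))
          (Ico 0 (tstar + ε) ∩ Iio tstar) t :=
        (hode t ⟨ht.1, h⟩).mono fun x hx => ⟨hx.1.1, hx.2⟩
      have h2 : HasDerivWithinAt ξ ((s/‖χ (ξ t)‖) • χ (ξ t)) (Ico 0 (tstar + ε)) t :=
        (hasDerivWithinAt_inter (Iio_mem_nhds h)).1 h1
      apply h2.congr_of_eventuallyEq _ (hηξ t ⟨ht.1, h⟩)
      filter_upwards [nhdsWithin_le_nhds (Iio_mem_nhds h)] with x hx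
      exact if_pos hx
    · subst h
      exact hjunction
    · -- t > tstar
      have hta : t < tstar + a := by linarith [ht.2]
      have h1 : HasDerivAt α ((s/‖χ (α t)‖) • χ (α t)) t :=
        (hα t ⟨by linarith, hta.le⟩).hasDerivAt (Icc_mem_nhds (by linarith) hta)
      rw [hηα t h.le]
      have h2 : HasDerivAt η ((s/‖χ (α t)‖) • χ (α t)) t := by
        apply h1.congr_of_eventuallyEq
        filter_upwards [Ioi_mem_nhds h] with x hx
        exact hηα x (le_of_lt hx)
      exact h2.hasDerivWithinAt
  exact ⟨ξstar, htend, main, fun hLip hnot => by_contra fun h0 => hnot (main hLip h0)⟩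
end
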